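/- arXiv:math/9912170 — 6 statements merged into one kernel-verified Lean document; each statement's English description precedes it below -/
import Mathlib

section
/- For every complex s with Re(s) > 1, ∫₀^∞ t^{s/2 − 1} (θ(t) − 1) dt = 2 π^{−s/2} Γ(s/2) ζ(s), where the integral is over t ∈ (0, ∞). -/
open MeasureTheory

open Complex HurwitzZeta in
private lemma riemann_aux (s : ℂ) (hs : 1 < s.re) :
    completedHurwitzZetaEven 0 s =
      mellin (fun t : ℝ ↦ ((evenKernel 0 t : ℝ) : ℂ) - 1) (s / 2) / 2 := by
  rw [completedHurwitzZetaEven]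
  congr 1
  refine ((hurwitzEvenFEPair 0).hasMellin (?_ : 1 / 2 < (s / 2).re)).2.symm.trans ?_
  · rwa [div_ofNat_re, div_lt_div_iff_of_pos_right two_pos]
  · congr 1 with t
    simp [hurwitzEvenFEPair]

/-- Riemann's integral representation: for `Re(s) > 1`,
`∫₀^∞ t^{s/2−1} (θ(t) − 1) dt = 2 π^{−s/2} Γ(s/2) ζ(s)`,
where `θ(t) = ∑_{n ∈ ℤ} exp(−n²πt)`. -/
theorem riemann_integral_representation (s : ℂ) (hs : 1 < s.re) :
    ∫ t in Set.Ioi (0 : ℝ), (t : ℂ) ^ (s / 2 - 1) *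
        (((∑' n : ℤ, Real.exp (-(n : ℝ) ^ 2 * Real.pi * t)) - 1 : ℝ) : ℂ)
      = 2 * (Real.pi : ℂ) ^ (-s / 2) * Complex.Gamma (s / 2) * riemannZeta s := by
  have hθ : ∀ t ∈ Set.Ioi (0 : ℝ),
      (∑' n : ℤ, Real.exp (-(n : ℝ) ^ 2 * Real.pi * t)) = HurwitzZeta.evenKernel 0 t := by
    intro t ht
    rw [show ((0 : UnitAddCircle)) = ((0 : ℝ) : UnitAddCircle) by norm_num]
    refine ((HurwitzZeta.hasSum_int_evenKernel 0 ht).congr_fun fun n ↦ ?_).tsum_eq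
    ring_nf
  have hL : (∫ t in Set.Ioi (0 : ℝ), (t : ℂ) ^ (s / 2 - 1) *
        (((∑' n : ℤ, Real.exp (-(n : ℝ) ^ 2 * Real.pi * t)) - 1 : ℝ) : ℂ))
      = mellin (fun t : ℝ ↦ ((HurwitzZeta.evenKernel 0 t : ℝ) : ℂ) - 1) (s / 2) := by
    rw [mellin]
    refine setIntegral_congr_fun measurableSet_Ioi fun t ht ↦ ?_
    rw [hθ t ht, smul_eq_mul]
    push_cast
    ring_nf
  rw [hL]
  have h2 := riemann_aux s hs
  rw [HurwitzZeta.completedHurwitzZetaEven_zero] at h2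
  have hmel : mellin (fun t : ℝ ↦ ((HurwitzZeta.evenKernel 0 t : ℝ) : ℂ) - 1) (s / 2)
      = 2 * completedRiemannZeta s := by
    rw [h2]; ring
  rw [hmel, riemannZeta_def_of_ne_zero (fun h ↦ by rw [h] at hs; norm_num at hs),
    completedRiemannZeta, HurwitzZeta.completedHurwitzZetaEven_zero] at *
  have hG : Complex.Gammaℝ s ≠ 0 :=
    Complex.Gammaℝ_ne_zero_of_re_pos (by linarith)
  rw [show (2 : ℂ) * (Real.pi : ℂ) ^ (-s / 2) * Complex.Gamma (s / 2) =
      2 * Complex.Gammaℝ s by rw [Complex.Gammaℝ_def]; ring]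
  field_simp
end

section
/- For every real y > 0, y·H(y) = H(1/y), where H(y) := 2y G′(y) + y² G″(y) and G(y) := ∑_{n ∈ ℤ} exp(−πn²y²). -/
/-!
By Poisson summation, `θ(1/t) = √t θ(t)`, i.e. `G(1/y) = y G(y)`. Differentiating this identity
once and twice expresses `G′(1/y)` and `G″(1/y)` through `G, G′, G″` at `y`; substituting into
`H(1/y) = 2y⁻¹ G′(1/y) + y⁻² G″(1/y)` the `G(y)` terms cancel and what remains is `y H(y)`.
-/

/-- `G(y) = θ(y²) = ∑_{n ∈ ℤ} exp(−πn²y²)`. -/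
noncomputable def G (y : ℝ) : ℝ := ∑' n : ℤ, Real.exp (-Real.pi * (n : ℝ) ^ 2 * y ^ 2)

/-- `H(y) = (d/dy)[y² G′(y)] = 2y G′(y) + y² G″(y)`. -/
noncomputable def H (y : ℝ) : ℝ := 2 * y * deriv G y + y ^ 2 * deriv (deriv G) y

open Set Filter Topology Complex

section InversionSymmetry

variable {u v f : ℝ → ℝ} {x : ℝ}

/-- Inversion is a local diffeomorphism of `(0, ∞)`, so either both derivatives exist or both are
the junk value `0`. -/
lemma deriv_apply_inv_of_eqOn (h : EqOn (fun y => u y⁻¹) v (Ioi 0)) (hx : 0 < x) :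
    deriv u x⁻¹ = -x ^ 2 * deriv v x := by
  by_cases hu : DifferentiableAt ℝ u x⁻¹
  · have hv : v =ᶠ[𝓝 x] fun y => u y⁻¹ :=
      eventually_of_mem (Ioi_mem_nhds hx) fun y hy => (h hy).symm
    rw [((hu.hasDerivAt.comp x (hasDerivAt_inv hx.ne')).congr_of_eventuallyEq hv).deriv]
    field_simp
  · have hv : ¬DifferentiableAt ℝ v x := fun hv => hu <| by
      have hu' : (fun y => v y⁻¹) =ᶠ[𝓝 x⁻¹] u :=
        eventually_of_mem (Ioi_mem_nhds (inv_pos.2 hx)) fun y hy => by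
          simpa using (h (mem_Ioi.2 (inv_pos.2 hy))).symm
      rw [← inv_inv x] at hv
      exact (hv.comp x⁻¹ (differentiableAt_inv (inv_ne_zero hx.ne'))).congr_of_eventuallyEq
        hu'.symm
    rw [deriv_zero_of_not_differentiableAt hu, deriv_zero_of_not_differentiableAt hv, mul_zero]

variable (hf : EqOn (fun y => f y⁻¹) (fun y => y * f y) (Ioi 0))
include hf

lemma deriv_inv_of_eqOn_inv_mul (hx : 0 < x) (hd : DifferentiableAt ℝ f x) :
    deriv f x⁻¹ = -(x ^ 2 * f x + x ^ 3 * deriv f x) := by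
  rw [deriv_apply_inv_of_eqOn hf hx, (hasDerivAt_id' x |>.fun_mul hd.hasDerivAt).deriv]
  ring

lemma deriv_deriv_inv_of_eqOn_inv_mul (hd : DifferentiableOn ℝ f (Ioi 0)) (hx : 0 < x)
    (hd' : DifferentiableAt ℝ (deriv f) x) :
    deriv (deriv f) x⁻¹ = 2 * x ^ 3 * f x + 4 * x ^ 4 * deriv f x + x ^ 5 * deriv (deriv f) x := by
  have hfd : EqOn (fun y => deriv f y⁻¹) (fun y => -(y ^ 2 * f y + y ^ 3 * deriv f y)) (Ioi 0) :=
    fun y hy => deriv_inv_of_eqOn_inv_mul hf hy (hd.differentiableAt (Ioi_mem_nhds hy))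
  have hdx := (hd.differentiableAt (Ioi_mem_nhds hx)).hasDerivAt
  rw [deriv_apply_inv_of_eqOn hfd hx,
    (((hasDerivAt_pow 2 x).fun_mul hdx).fun_add
      ((hasDerivAt_pow 3 x).fun_mul hd'.hasDerivAt)).fun_neg.deriv]
  push_cast
  ring

end InversionSymmetry

lemma ofReal_G (y : ℝ) : (G y : ℂ) = jacobiTheta ((y : ℂ) ^ 2 * I) := by
  rw [G, ofReal_tsum, jacobiTheta]
  refine tsum_congr fun n => ?_
  rw [ofReal_exp]
  push_cast
  congr 1
  linear_combination -(Real.pi : ℂ) * (n : ℂ) ^ 2 * (y : ℂ) ^ 2 * I_sq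

lemma analyticOnNhd_G : AnalyticOnNhd ℝ G (Ioi 0) := by
  have hθ : AnalyticOnNhd ℂ jacobiTheta {τ | 0 < τ.im} :=
    DifferentiableOn.analyticOnNhd
      (fun _ hτ => (differentiableAt_jacobiTheta hτ).differentiableWithinAt)
      (isOpen_lt continuous_const continuous_im)
  have hG : G = fun y : ℝ => (jacobiTheta ((y : ℂ) ^ 2 * I)).re := by
    funext y
    rw [← ofReal_G, ofReal_re]
  intro y hy
  rw [hG]
  have hτ : 0 < ((y : ℂ) ^ 2 * I).im := by
    simpa [← ofReal_pow] using pow_pos (mem_Ioi.1 hy) 2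
  have hpoly : AnalyticAt ℝ (fun y : ℝ => (y : ℂ) ^ 2 * I) y :=
    ((ofRealCLM.analyticAt y).pow 2).mul analyticAt_const
  have hθy : AnalyticAt ℝ jacobiTheta ((y : ℂ) ^ 2 * I) := (hθ _ hτ).restrictScalars
  exact (reCLM.analyticAt _).comp (hθy.comp (f := fun y : ℝ => (y : ℂ) ^ 2 * I) hpoly)

lemma G_inv {y : ℝ} (hy : 0 < y) : G y⁻¹ = y * G y := by
  have h := Real.tsum_exp_neg_mul_int_sq (pow_pos hy 2)
  rw [← Real.sqrt_eq_rpow, Real.sqrt_sq hy.le] at h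
  calc G y⁻¹ = ∑' n : ℤ, Real.exp (-Real.pi / y ^ 2 * (n : ℝ) ^ 2) :=
        tsum_congr fun n => by congr 1; ring
    _ = y * ∑' n : ℤ, Real.exp (-Real.pi * y ^ 2 * (n : ℝ) ^ 2) := by
        rw [h]; field_simp
    _ = y * G y := congrArg (y * ·) <| tsum_congr fun n => by congr 1; ring

/-- The functional equation `y H(y) = H(1/y)` for `y > 0`. -/
theorem H_functional_equation (y : ℝ) (hy : 0 < y) : y * H y = H (1 / y) := by
  have hG : EqOn (fun y => G y⁻¹) (fun y => y * G y) (Ioi 0) := fun _ h => G_inv h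
  have hd : DifferentiableOn ℝ G (Ioi 0) := analyticOnNhd_G.differentiableOn
  have hd' : DifferentiableAt ℝ (deriv G) y :=
    (analyticOnNhd_G.deriv y hy).differentiableAt
  rw [one_div, H, H, deriv_deriv_inv_of_eqOn_inv_mul hG hd hy hd',
    deriv_inv_of_eqOn_inv_mul hG hy (hd.differentiableAt (Ioi_mem_nhds hy))]
  field_simp
  ring
end

section
/- For every real y > 0: G(y) + y G′(y) = −y^{−2} G′(1/y) = ∑_{n ∈ ℤ} (1 − 2πn²y²) exp(−πn²y²) = 4π y^{−3} ∑_{n=1}^∞ n² exp(−πn²/y²). Moreover this common value equals ∫₀^y x^{−1} H(x) dx, i.e. it is the cumulative distribution function at y of the probability density x ↦ x^{−1}H(x) on (0,∞). -/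
open MeasureTheory

open Real Filter Set Topology

/-!
With `Tₖ(y) = ∑ₙ (n²)ᵏ e^{-πn²y²}` one has `G′ = -2πy T₁` and `Tₖ′ = -2πy Tₖ₊₁`. Jacobi's
identity `y G(y) = G(1/y)` (Poisson summation) differentiates to
`G(y) + y G′(y) = -y⁻² G′(1/y) = 2π y⁻³ T₁(1/y)`, which gives the series expressions.
The function `F(y) = G(y) + y G′(y) = (yG)′(y)` has derivative `2G′ + yG″ = y⁻¹ H(y)`, and the
representation through `T₁(1/y)` shows that both `F` and `F′` tend to `0` as `y → 0⁺`, because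
`Tₖ(t)` decays like `e^{-t}` as `t → ∞` when `k ≠ 0`. The fundamental theorem of calculus on
`(0, y)` then identifies `F(y)` with `∫₀^y x⁻¹ H(x) dx`.
-/

lemma ContinuousOn.intervalIntegrable_of_tendsto_nhdsGT {E : Type*} [NormedAddCommGroup E]
    {f : ℝ → E} {a b : ℝ} {L : E} (hab : a ≤ b) (hf : ContinuousOn f (Ioc a b))
    (hlim : Tendsto f (𝓝[>] a) (𝓝 L)) : IntervalIntegrable f volume a b := by
  classical
  have hcont : ContinuousOn (Function.update f a L) (Icc a b) := by
    intro x hx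
    rcases hx.1.eq_or_lt with rfl | hax
    · exact continuousWithinAt_update_same.2 <|
        hlim.mono_left <| nhdsWithin_mono _ fun z hz ↦ lt_of_le_of_ne hz.1.1 (Ne.symm hz.2)
    · have hIoc : Ioc a b ∈ 𝓝[Icc a b] x :=
        mem_nhdsWithin.2 ⟨Ioi a, isOpen_Ioi, hax, fun z hz ↦ ⟨hz.1, hz.2.2⟩⟩
      refine ((hf x ⟨hax, hx.2⟩).mono_of_mem_nhdsWithin hIoc).congr_of_eventuallyEq ?_
        (Function.update_of_ne hax.ne' _ _)
      filter_upwards [mem_nhdsWithin_of_mem_nhds (Ioi_mem_nhds hax)] with z hz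
      exact Function.update_of_ne (ne_of_gt hz) _ _
  rw [intervalIntegrable_iff_integrableOn_Ioc_of_le hab]
  refine (hcont.integrableOn_Icc.mono_set Ioc_subset_Icc_self).congr_fun
    (fun x hx ↦ Function.update_of_ne hx.1.ne' _ _) measurableSet_Ioc

lemma tsum_int_eq_two_mul_tsum_succ {f : ℤ → ℝ} (hf : f.Even) (h0 : f 0 = 0)
    (hs : Summable f) : ∑' n, f n = 2 * ∑' n : ℕ, f (n + 1) := by
  rw [tsum_int_eq_zero_add_two_mul_tsum_pnat hf hs, h0, zero_add,
    tsum_pnat_eq_tsum_succ (f := fun n : ℕ ↦ f n)]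
  simp [nsmul_eq_mul]

noncomputable def thetaMoment (k : ℕ) (y : ℝ) : ℝ :=
  ∑' n : ℤ, ((n : ℝ) ^ 2) ^ k * exp (-π * (n : ℝ) ^ 2 * y ^ 2)

lemma summable_thetaMoment (k : ℕ) {y : ℝ} (hy : y ≠ 0) :
    Summable fun n : ℤ ↦ ((n : ℝ) ^ 2) ^ k * exp (-π * (n : ℝ) ^ 2 * y ^ 2) := by
  refine (summable_pow_mul_jacobiTheta₂_term_bound 0 (pow_pos (abs_pos.2 hy) 2) (2 * k)).congr
    fun n ↦ ?_
  simp only [Int.cast_abs, sq_abs, pow_mul]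
  ring_nf

lemma thetaMoment_eq_two_mul_tsum {k : ℕ} (hk : k ≠ 0) {y : ℝ} (hy : y ≠ 0) :
    thetaMoment k y =
      2 * ∑' n : ℕ, (((n : ℝ) + 1) ^ 2) ^ k * exp (-π * ((n : ℝ) + 1) ^ 2 * y ^ 2) := by
  rw [thetaMoment, tsum_int_eq_two_mul_tsum_succ (fun n ↦ by simp) (by simp [hk])
    (summable_thetaMoment k hy)]
  push_cast
  rfl

lemma thetaMoment_nonneg (k : ℕ) (y : ℝ) : 0 ≤ thetaMoment k y :=
  tsum_nonneg fun _ ↦ by positivity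

lemma hasDerivAt_thetaMoment (k : ℕ) {y : ℝ} (hy : 0 < y) :
    HasDerivAt (thetaMoment k) (-2 * π * y * thetaMoment (k + 1) y) y := by
  have hmem : y ∈ Ioo (y / 2) (2 * y) := ⟨by linarith, by linarith⟩
  have hterm (n : ℤ) (x : ℝ) :
      HasDerivAt (fun x ↦ ((n : ℝ) ^ 2) ^ k * exp (-π * n ^ 2 * x ^ 2))
      (-(2 * π * x * (((n : ℝ) ^ 2) ^ (k + 1) * exp (-π * n ^ 2 * x ^ 2)))) x := by
    refine ((((hasDerivAt_pow 2 x).const_mul (-π * n ^ 2)).exp).const_mul _).congr_deriv ?_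
    push_cast
    ring
  have hbound (n : ℤ) (x : ℝ) (hx : x ∈ Ioo (y / 2) (2 * y)) :
      ‖-(2 * π * x * (((n : ℝ) ^ 2) ^ (k + 1) * exp (-π * n ^ 2 * x ^ 2)))‖ ≤
        4 * π * y * (((n : ℝ) ^ 2) ^ (k + 1) * exp (-π * n ^ 2 * (y / 2) ^ 2)) := by
    have hx0 : 0 < x := by linarith [hx.1]
    rw [norm_neg, norm_of_nonneg (by positivity)]
    have : exp (-π * n ^ 2 * x ^ 2) ≤ exp (-π * n ^ 2 * (y / 2) ^ 2) := by
      rw [exp_le_exp]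
      have : (y / 2) ^ 2 ≤ x ^ 2 := pow_le_pow_left₀ (by positivity) hx.1.le 2
      nlinarith [mul_nonneg pi_pos.le (sq_nonneg (n : ℝ))]
    calc 2 * π * x * (((n : ℝ) ^ 2) ^ (k + 1) * exp (-π * n ^ 2 * x ^ 2))
        ≤ 2 * π * (2 * y) * (((n : ℝ) ^ 2) ^ (k + 1) * exp (-π * n ^ 2 * (y / 2) ^ 2)) := by
          gcongr; exact hx.2.le
      _ = _ := by ring
  have := hasDerivAt_tsum_of_isPreconnected
    ((summable_thetaMoment (k + 1) (by positivity : y / 2 ≠ 0)).mul_left (4 * π * y))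
    isOpen_Ioo isPreconnected_Ioo (fun n x _ ↦ hterm n x) hbound hmem
    (summable_thetaMoment k hy.ne') hmem
  rw [tsum_neg, tsum_mul_left] at this
  exact this.congr_deriv (by rw [thetaMoment]; ring)

lemma thetaMoment_le_exp_mul {k : ℕ} (hk : k ≠ 0) {t : ℝ} (ht : 1 ≤ t) :
    thetaMoment k t ≤ exp (1 - t) * thetaMoment k 1 := by
  rw [thetaMoment, thetaMoment, ← tsum_mul_left]
  refine Summable.tsum_le_tsum (fun n ↦ ?_) (summable_thetaMoment k (by positivity))
    ((summable_thetaMoment k one_ne_zero).mul_left _)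
  rcases eq_or_ne n 0 with rfl | hn
  · simp [hk]
  have hn1 : (1 : ℝ) ≤ (n : ℝ) ^ 2 := by
    have : (1 : ℤ) ≤ n ^ 2 := by nlinarith [Int.one_le_abs hn, sq_abs n]
    exact_mod_cast this
  rw [mul_left_comm, ← exp_add, one_pow, mul_one]
  gcongr
  nlinarith [mul_nonneg (sub_nonneg.2 hn1)
      (mul_nonneg (sub_nonneg.2 ht) (by linarith : 0 ≤ t + 1)),
    mul_nonneg (sub_nonneg.2 ht) (by nlinarith [pi_gt_three] : 0 ≤ π * (t + 1) - 1)]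

lemma tendsto_pow_mul_thetaMoment_atTop (j : ℕ) {k : ℕ} (hk : k ≠ 0) :
    Tendsto (fun t ↦ t ^ j * thetaMoment k t) atTop (𝓝 0) := by
  have hlim :
      Tendsto (fun t : ℝ ↦ exp 1 * thetaMoment k 1 * (t ^ j * exp (-t))) atTop (𝓝 0) := by
    simpa using (tendsto_pow_mul_exp_neg_atTop_nhds_zero j).const_mul (exp 1 * thetaMoment k 1)
  refine squeeze_zero' ?_ ?_ hlim
  · filter_upwards [eventually_ge_atTop 0] with t ht
    exact mul_nonneg (pow_nonneg ht j) (thetaMoment_nonneg k t)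
  · filter_upwards [eventually_ge_atTop 1] with t ht
    calc t ^ j * thetaMoment k t ≤ t ^ j * (exp (1 - t) * thetaMoment k 1) := by
          gcongr; exact thetaMoment_le_exp_mul hk ht
      _ = _ := by rw [sub_eq_add_neg, exp_add]; ring

lemma tendsto_inv_pow_mul_thetaMoment_inv_nhdsGT_zero (j : ℕ) {k : ℕ} (hk : k ≠ 0) :
    Tendsto (fun x ↦ x⁻¹ ^ j * thetaMoment k x⁻¹) (𝓝[>] 0) (𝓝 0) :=
  (tendsto_pow_mul_thetaMoment_atTop j hk).comp tendsto_inv_nhdsGT_zero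

lemma G_eq_thetaMoment_zero : G = thetaMoment 0 := by
  funext y
  simp [G, thetaMoment]

lemma hasDerivAt_G {y : ℝ} (hy : 0 < y) : HasDerivAt G (-2 * π * y * thetaMoment 1 y) y :=
  G_eq_thetaMoment_zero ▸ hasDerivAt_thetaMoment 0 hy

lemma deriv_G {y : ℝ} (hy : 0 < y) : deriv G y = -2 * π * y * thetaMoment 1 y :=
  (hasDerivAt_G hy).deriv

lemma G_add_mul_deriv_G_eq_tsum {y : ℝ} (hy : 0 < y) :
    G y + y * deriv G y =
      ∑' n : ℤ, (1 - 2 * π * (n : ℝ) ^ 2 * y ^ 2) * exp (-π * n ^ 2 * y ^ 2) := by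
  have h0 : Summable fun n : ℤ ↦ exp (-π * (n : ℝ) ^ 2 * y ^ 2) := by
    simpa using summable_thetaMoment 0 hy.ne'
  have h1 := (summable_thetaMoment 1 hy.ne').mul_left (-2 * π * y ^ 2)
  calc G y + y * deriv G y = G y + -2 * π * y ^ 2 * thetaMoment 1 y := by
        rw [deriv_G hy]; ring
    _ = _ := by
      rw [G, thetaMoment, ← tsum_mul_left, ← h0.tsum_add h1]
      exact tsum_congr fun n ↦ by ring

lemma differentiableAt_deriv_G {y : ℝ} (hy : 0 < y) : DifferentiableAt ℝ (deriv G) y := by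
  have hev : (fun x ↦ -2 * π * x * thetaMoment 1 x) =ᶠ[𝓝 y] deriv G := by
    filter_upwards [Ioi_mem_nhds hy] with x hx using (deriv_G hx).symm
  refine (DifferentiableAt.mul ?_
    (hasDerivAt_thetaMoment 1 hy).differentiableAt).congr_of_eventuallyEq hev.symm
  fun_prop

lemma mul_G_eq_G_inv {y : ℝ} (hy : 0 < y) : y * G y = G y⁻¹ := by
  have hsqrt : (y ^ 2) ^ (1 / 2 : ℝ) = y := by
    rw [← sqrt_eq_rpow, sqrt_sq hy.le]
  have h := tsum_exp_neg_mul_int_sq (pow_pos hy 2)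
  rw [hsqrt] at h
  have hG : G y = ∑' n : ℤ, exp (-π * y ^ 2 * n ^ 2) := tsum_congr fun n ↦ by ring_nf
  have hG_inv : G y⁻¹ = ∑' n : ℤ, exp (-π / y ^ 2 * n ^ 2) := tsum_congr fun n ↦ by ring_nf
  rw [hG, hG_inv, h]
  field_simp

lemma G_add_mul_deriv_G_eq_neg_deriv_G_inv {y : ℝ} (hy : 0 < y) :
    G y + y * deriv G y = -(y ^ 2)⁻¹ * deriv G y⁻¹ := by
  have hleft : HasDerivAt (fun x ↦ x * G x) (G y + y * deriv G y) y :=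
    ((hasDerivAt_id' y).mul (hasDerivAt_G hy).differentiableAt.hasDerivAt).congr_deriv
      (by rw [one_mul])
  have hright : HasDerivAt (fun x ↦ G x⁻¹) (deriv G y⁻¹ * -(y ^ 2)⁻¹) y :=
    (hasDerivAt_G (inv_pos.2 hy)).differentiableAt.hasDerivAt.comp y (hasDerivAt_inv hy.ne')
  have hev : (fun x ↦ G x⁻¹) =ᶠ[𝓝 y] fun x ↦ x * G x := by
    filter_upwards [Ioi_mem_nhds hy] with x hx using (mul_G_eq_G_inv hx).symm
  rw [← (hright.congr_of_eventuallyEq hev.symm).unique hleft, mul_comm]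

lemma G_add_mul_deriv_G_eq_thetaMoment_inv {y : ℝ} (hy : 0 < y) :
    G y + y * deriv G y = 2 * π * (y⁻¹ ^ 3 * thetaMoment 1 y⁻¹) := by
  rw [G_add_mul_deriv_G_eq_neg_deriv_G_inv hy, deriv_G (inv_pos.2 hy)]
  ring

lemma hasDerivAt_G_add_mul_deriv_G {x : ℝ} (hx : 0 < x) :
    HasDerivAt (fun x ↦ G x + x * deriv G x) (x⁻¹ * H x) x := by
  refine ((hasDerivAt_G hx).differentiableAt.hasDerivAt.add
    ((hasDerivAt_id' x).mul (differentiableAt_deriv_G hx).hasDerivAt)).congr_deriv ?_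
  rw [H]
  field_simp
  ring

lemma inv_mul_H_eq {x : ℝ} (hx : 0 < x) :
    x⁻¹ * H x =
      -6 * π * (x⁻¹ ^ 4 * thetaMoment 1 x⁻¹) + 4 * π ^ 2 * (x⁻¹ ^ 6 * thetaMoment 2 x⁻¹) := by
  have hinv : HasDerivAt (fun x : ℝ ↦ x⁻¹) (-(x ^ 2)⁻¹) x := hasDerivAt_inv hx.ne'
  have hΦ : HasDerivAt (fun x ↦ 2 * π * (x⁻¹ ^ 3 * thetaMoment 1 x⁻¹))
      (-6 * π * (x⁻¹ ^ 4 * thetaMoment 1 x⁻¹) + 4 * π ^ 2 * (x⁻¹ ^ 6 * thetaMoment 2 x⁻¹))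
      x := by
    refine (((hinv.pow 3).mul ((hasDerivAt_thetaMoment 1 (inv_pos.2 hx)).comp x
      hinv)).const_mul (2 * π)).congr_deriv ?_
    simp only [Pi.pow_apply, Function.comp_apply, inv_pow]
    field_simp
    ring
  refine (hasDerivAt_G_add_mul_deriv_G hx).unique (hΦ.congr_of_eventuallyEq ?_)
  filter_upwards [Ioi_mem_nhds hx] with z hz using G_add_mul_deriv_G_eq_thetaMoment_inv hz

lemma continuousOn_inv_mul_H : ContinuousOn (fun x ↦ x⁻¹ * H x) (Ioi 0) := by
  have hT (k : ℕ) : ContinuousOn (fun x ↦ thetaMoment k x⁻¹) (Ioi 0) := fun x hx ↦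
    ((hasDerivAt_thetaMoment k (inv_pos.2 hx)).continuousAt.comp
      (continuousAt_inv₀ (ne_of_gt hx))).continuousWithinAt
  refine ContinuousOn.congr ?_ fun x hx ↦ inv_mul_H_eq hx
  have hinv : ContinuousOn (fun x : ℝ ↦ x⁻¹) (Ioi 0) :=
    continuousOn_inv₀.mono fun x hx ↦ ne_of_gt hx
  fun_prop (disch := assumption)

lemma tendsto_inv_mul_H_nhdsGT_zero : Tendsto (fun x ↦ x⁻¹ * H x) (𝓝[>] 0) (𝓝 0) := by
  have h :=
    ((tendsto_inv_pow_mul_thetaMoment_inv_nhdsGT_zero 4 one_ne_zero).const_mul (-6 * π)).add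
      ((tendsto_inv_pow_mul_thetaMoment_inv_nhdsGT_zero 6 two_ne_zero).const_mul (4 * π ^ 2))
  rw [mul_zero, mul_zero, add_zero] at h
  refine h.congr' ?_
  filter_upwards [self_mem_nhdsWithin] with x hx using (inv_mul_H_eq hx).symm

lemma G_add_mul_deriv_G_eq_integral {y : ℝ} (hy : 0 < y) :
    G y + y * deriv G y = ∫ x in Ioo 0 y, x⁻¹ * H x := by
  have hint : IntervalIntegrable (fun x ↦ x⁻¹ * H x) volume 0 y :=
    (continuousOn_inv_mul_H.mono Ioc_subset_Ioi_self).intervalIntegrable_of_tendsto_nhdsGT hy.le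
      tendsto_inv_mul_H_nhdsGT_zero
  have hzero : Tendsto (fun x ↦ G x + x * deriv G x) (𝓝[>] 0) (𝓝 0) := by
    have h := (tendsto_inv_pow_mul_thetaMoment_inv_nhdsGT_zero 3 one_ne_zero).const_mul (2 * π)
    rw [mul_zero] at h
    refine h.congr' ?_
    filter_upwards [self_mem_nhdsWithin] with x hx using
      (G_add_mul_deriv_G_eq_thetaMoment_inv hx).symm
  have h := intervalIntegral.integral_eq_sub_of_hasDerivAt_of_tendsto hy
    (fun x hx ↦ hasDerivAt_G_add_mul_deriv_G hx.1) hint hzero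
    (hasDerivAt_G_add_mul_deriv_G hy).continuousAt.continuousWithinAt
  rw [intervalIntegral.integral_of_le hy.le, integral_Ioc_eq_integral_Ioo, sub_zero] at h
  exact h.symm

/-- For `y > 0`, the distribution function of the density `x ↦ x⁻¹ H(x)`:
`G(y) + y G′(y) = −y^{−2} G′(1/y) = ∑_{n∈ℤ} (1 − 2πn²y²) e^{−πn²y²}
 = 4π y^{−3} ∑_{n≥1} n² e^{−πn²/y²} = ∫₀^y x⁻¹ H(x) dx`. -/
theorem cdf_of_H (y : ℝ) (hy : 0 < y) :
    G y + y * deriv G y = -(1 / y ^ 2) * deriv G (1 / y) ∧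
    G y + y * deriv G y
      = ∑' n : ℤ, (1 - 2 * Real.pi * (n : ℝ) ^ 2 * y ^ 2) *
          Real.exp (-Real.pi * (n : ℝ) ^ 2 * y ^ 2) ∧
    G y + y * deriv G y
      = 4 * Real.pi / y ^ 3 * ∑' n : ℕ, ((n : ℝ) + 1) ^ 2 *
          Real.exp (-Real.pi * ((n : ℝ) + 1) ^ 2 / y ^ 2) ∧
    G y + y * deriv G y = ∫ x in Set.Ioo (0 : ℝ) y, x⁻¹ * H x := by
  refine ⟨by simpa only [one_div] using G_add_mul_deriv_G_eq_neg_deriv_G_inv hy,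
    G_add_mul_deriv_G_eq_tsum hy, ?_, G_add_mul_deriv_G_eq_integral hy⟩
  rw [G_add_mul_deriv_G_eq_thetaMoment_inv hy,
    thetaMoment_eq_two_mul_tsum one_ne_zero (inv_ne_zero hy.ne')]
  simp only [pow_one, inv_pow, ← div_eq_mul_inv]
  ring
end

section
/- For all reals a > 0 and λ > 0: ∫₀^∞ (a/√(2πt³)) · exp(−a²/(2t)) · exp(−λt) dt = exp(−a√(2λ)). -/
/-!
Completing the square, `a²/(2t) + λt = G(t)² + a√(2λ)` with `G(t) = s√t - b/√t`, `s = √λ`,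
`b = a/√2`, turns the integral into `e^{-a√(2λ)} ∫₀^∞ b t^{-3/2} e^{-G(t)²} / √π dt`.
The inversion `t ↦ (b/s)²/t` sends `G` to `-G` and exchanges the weights `b t^{-3/2}` and
`s t^{-1/2}`, whose mean is `G'`. Hence the last integral equals
`∫₀^∞ G'(t) e^{-G(t)²} / √π dt = ∫ e^{-x²} / √π dx = 1` (Cauchy–Schlömilch substitution).
-/

open MeasureTheory Real Set

noncomputable def schlomilchMap (s b t : ℝ) : ℝ := s * √t - b / √t

section
variable {s b : ℝ}

theorem hasDerivAt_schlomilchMap {t : ℝ} (ht : 0 < t) :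
    HasDerivAt (schlomilchMap s b) (s / (2 * √t) + b / (2 * (t * √t))) t := by
  have hsqrt := hasDerivAt_sqrt ht.ne'
  have hst : √t ≠ 0 := (sqrt_pos.2 ht).ne'
  have h : HasDerivAt (fun u => s * √u - b * (√u)⁻¹)
      (s * (1 / (2 * √t)) - b * (-(1 / (2 * √t)) / √t ^ 2)) t :=
    (hsqrt.const_mul s).sub ((hsqrt.inv hst).const_mul b)
  convert h using 1
  · funext u; simp only [schlomilchMap, div_eq_mul_inv]
  · rw [sq_sqrt ht.le]; field_simp; ring

@[fun_prop]
theorem measurable_schlomilchMap : Measurable (schlomilchMap s b) := by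
  unfold schlomilchMap; fun_prop

theorem monotoneOn_schlomilchMap (hs : 0 ≤ s) (hb : 0 ≤ b) :
    MonotoneOn (schlomilchMap s b) (Ioi 0) := by
  intro t ht u _ htu
  have hsqrt : √t ≤ √u := sqrt_le_sqrt htu
  have : b / √u ≤ b / √t := div_le_div_of_nonneg_left hb (sqrt_pos.2 ht) hsqrt
  unfold schlomilchMap
  nlinarith

theorem image_schlomilchMap (hs : 0 < s) (hb : 0 < b) :
    schlomilchMap s b '' Ioi 0 = univ := by
  refine eq_univ_of_forall fun y => ?_
  -- `√t` is the positive root of `s u² - y u - b`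
  set D := √(y ^ 2 + 4 * s * b)
  have hD : D ^ 2 = y ^ 2 + 4 * s * b := sq_sqrt (by positivity)
  have hyD : -y < D := by nlinarith [sqrt_nonneg (y ^ 2 + 4 * s * b), mul_pos hs hb]
  set u := (y + D) / (2 * s)
  have hu : 0 < u := div_pos (by linarith) (by linarith)
  refine ⟨u ^ 2, mem_Ioi.2 (by positivity), ?_⟩
  rw [schlomilchMap, sqrt_sq hu.le]
  field_simp
  simp only [u]
  field_simp
  linear_combination hD

theorem schlomilchMap_div (hs : 0 < s) (hb : 0 < b) {t : ℝ} (ht : 0 < t) :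
    schlomilchMap s b ((b / s) ^ 2 / t) = -schlomilchMap s b t := by
  have hst : 0 < √t := sqrt_pos.2 ht
  rw [schlomilchMap, schlomilchMap, sqrt_div (by positivity), sqrt_sq (by positivity)]
  field_simp
  ring

theorem schlomilchMap_sq {t : ℝ} (ht : 0 < t) :
    schlomilchMap s b t ^ 2 = s ^ 2 * t - 2 * s * b + b ^ 2 / t := by
  have hst : 0 < √t := sqrt_pos.2 ht
  rw [schlomilchMap]
  field_simp
  rw [sq_sqrt ht.le]
  ring

theorem lintegral_deriv_schlomilchMap_mul (hs : 0 < s) (hb : 0 < b) (g : ℝ → ENNReal) :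
    ∫⁻ t in Ioi 0, ENNReal.ofReal (s / (2 * √t) + b / (2 * (t * √t))) * g (schlomilchMap s b t)
      = ∫⁻ x, g x := by
  rw [← lintegral_image_eq_lintegral_deriv_mul_of_monotoneOn measurableSet_Ioi
      (fun t ht => (hasDerivAt_schlomilchMap ht).hasDerivWithinAt)
      (monotoneOn_schlomilchMap hs.le hb.le), image_schlomilchMap hs hb, setLIntegral_univ]

theorem lintegral_schlomilchMap_symm (hs : 0 < s) (hb : 0 < b) (g : ℝ → ENNReal) :
    ∫⁻ t in Ioi 0, ENNReal.ofReal (b / (t * √t)) * g (schlomilchMap s b t ^ 2)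
      = ∫⁻ t in Ioi 0, ENNReal.ofReal (s / √t) * g (schlomilchMap s b t ^ 2) := by
  set k := (b / s) ^ 2
  have hk : 0 < k := by positivity
  have himage : (fun t => k / t) '' Ioi 0 = Ioi 0 := by
    refine Subset.antisymm (image_subset_iff.2 fun t ht => div_pos hk ht) fun t ht => ?_
    exact ⟨k / t, div_pos hk ht, div_div_cancel₀ hk.ne'⟩
  have hderiv (t : ℝ) (ht : t ∈ Ioi 0) :
      HasDerivWithinAt (fun t => k / t) (-(k / t ^ 2)) (Ioi 0) t := by
    refine (((hasDerivAt_const t k).div (hasDerivAt_id t) (ne_of_gt ht)).congr_deriv ?_)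
      |>.hasDerivWithinAt
    simp [neg_div]
  have hanti : AntitoneOn (fun t => k / t) (Ioi 0) := fun t ht u _ htu =>
    div_le_div_of_nonneg_left hk.le ht htu
  conv_lhs => rw [← himage]
  rw [lintegral_image_eq_lintegral_deriv_mul_of_antitoneOn measurableSet_Ioi hderiv hanti]
  refine setLIntegral_congr_fun measurableSet_Ioi fun t ht => ?_
  have hst : 0 < √t := sqrt_pos.2 ht
  rw [neg_neg, schlomilchMap_div hs hb ht, neg_sq, ← mul_assoc,
    ← ENNReal.ofReal_mul (by positivity)]
  congr 2
  rw [sqrt_div hk.le, sqrt_sq (by positivity)]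
  field_simp
  rw [sq_sqrt ht.le, div_self (ne_of_gt ht)]

theorem lintegral_schlomilchMap (hs : 0 < s) (hb : 0 < b) {g : ℝ → ENNReal} (hg : Measurable g) :
    ∫⁻ t in Ioi 0, ENNReal.ofReal (b / (t * √t)) * g (schlomilchMap s b t ^ 2)
      = ∫⁻ x, g (x ^ 2) := by
  have hmeas :
      Measurable fun t => ENNReal.ofReal (b / (t * √t)) * g (schlomilchMap s b t ^ 2) := by
    fun_prop
  refine (ENNReal.mul_right_inj two_ne_zero ENNReal.ofNat_ne_top).mp ?_
  calc 2 * (∫⁻ t in Ioi 0, ENNReal.ofReal (b / (t * √t)) * g (schlomilchMap s b t ^ 2))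
      = (∫⁻ t in Ioi 0, ENNReal.ofReal (b / (t * √t)) * g (schlomilchMap s b t ^ 2))
          + ∫⁻ t in Ioi 0, ENNReal.ofReal (s / √t) * g (schlomilchMap s b t ^ 2) := by
        rw [two_mul, lintegral_schlomilchMap_symm hs hb g]
    _ = ∫⁻ t in Ioi 0, ENNReal.ofReal (b / (t * √t)) * g (schlomilchMap s b t ^ 2)
          + ENNReal.ofReal (s / √t) * g (schlomilchMap s b t ^ 2) :=
      (lintegral_add_left hmeas _).symm
    _ = ∫⁻ t in Ioi 0, 2 * (ENNReal.ofReal (s / (2 * √t) + b / (2 * (t * √t)))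
            * g (schlomilchMap s b t ^ 2)) := by
        refine setLIntegral_congr_fun measurableSet_Ioi fun t ht => ?_
        have ht : 0 < t := ht
        have hb' : 0 ≤ b / (t * √t) := by positivity
        have hs' : 0 ≤ s / √t := by positivity
        rw [← add_mul, ← mul_assoc, ← ENNReal.ofReal_add hb' hs', ← ENNReal.ofReal_ofNat 2,
          ← ENNReal.ofReal_mul zero_le_two]
        congr 2
        field_simp
        ring
    _ = 2 * ∫⁻ x, g (x ^ 2) := by
        rw [lintegral_const_mul' _ _ ENNReal.ofNat_ne_top,
          lintegral_deriv_schlomilchMap_mul hs hb (fun x => g (x ^ 2))]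

theorem integral_schlomilchMap (hs : 0 < s) (hb : 0 < b) {f : ℝ → ℝ} (hf : Measurable f)
    (hf₀ : ∀ y, 0 ≤ f y) :
    ∫ t in Ioi 0, b / (t * √t) * f (schlomilchMap s b t ^ 2) = ∫ x, f (x ^ 2) := by
  have hweight : ∀ t ∈ Ioi (0 : ℝ), 0 ≤ b / (t * √t) := fun t ht =>
    div_nonneg hb.le (mul_nonneg (le_of_lt ht) (sqrt_nonneg t))
  rw [integral_eq_lintegral_of_nonneg_ae (ae_restrict_of_forall_mem measurableSet_Ioi
      fun t ht => mul_nonneg (hweight t ht) (hf₀ _)) (by fun_prop),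
    integral_eq_lintegral_of_nonneg_ae (ae_of_all _ fun x => hf₀ _)
      (by fun_prop : Measurable fun x : ℝ => f (x ^ 2)).aestronglyMeasurable,
    ← lintegral_schlomilchMap hs hb (g := fun y => ENNReal.ofReal (f y)) (by fun_prop)]
  congr 1
  refine setLIntegral_congr_fun measurableSet_Ioi fun t ht => ?_
  exact ENNReal.ofReal_mul (hweight t ht)

end

theorem levy_integrand_eq (a : ℝ) {lam t : ℝ} (hlam : 0 ≤ lam) (ht : 0 < t) :
    a / √(2 * π * t ^ 3) * exp (-a ^ 2 / (2 * t)) * exp (-lam * t)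
      = exp (-a * √(2 * lam)) *
        (a / √2 / (t * √t) * (exp (-schlomilchMap (√lam) (a / √2) t ^ 2) / √π)) := by
  have hst : 0 < √t := sqrt_pos.2 ht
  have hden : √(2 * π * t ^ 3) = √2 * √π * (t * √t) := by
    rw [show 2 * π * t ^ 3 = 2 * π * (t * √t) ^ 2 by rw [mul_pow, sq_sqrt ht.le]; ring,
      sqrt_mul (by positivity), sqrt_mul zero_le_two, sqrt_sq (by positivity)]
  have hexp : -a ^ 2 / (2 * t) + -lam * t
      = -a * √(2 * lam) + -schlomilchMap (√lam) (a / √2) t ^ 2 := by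
    rw [schlomilchMap_sq ht, sq_sqrt hlam, div_pow, sq_sqrt zero_le_two, sqrt_mul zero_le_two]
    field_simp
    rw [sq_sqrt zero_le_two]
    ring
  rw [hden, mul_assoc, ← exp_add, hexp, exp_add]
  field_simp

/-- Lévy's formula: for `a, λ > 0`,
`∫₀^∞ (a/√(2πt³)) e^{−a²/(2t)} e^{−λt} dt = e^{−a√(2λ)}`. -/
theorem levy_laplace_transform (a lam : ℝ) (ha : 0 < a) (hlam : 0 < lam) :
    ∫ t in Set.Ioi (0 : ℝ),
        (a / Real.sqrt (2 * Real.pi * t ^ 3)) * Real.exp (-a ^ 2 / (2 * t)) *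
          Real.exp (-lam * t)
      = Real.exp (-a * Real.sqrt (2 * lam)) := by
  calc _ = ∫ t in Ioi 0, exp (-a * √(2 * lam)) *
          (a / √2 / (t * √t) * (exp (-schlomilchMap (√lam) (a / √2) t ^ 2) / √π)) :=
        setIntegral_congr_fun measurableSet_Ioi fun t ht => levy_integrand_eq a hlam.le ht
    _ = exp (-a * √(2 * lam)) * ((∫ x, exp (-x ^ 2)) / √π) := by
        rw [integral_const_mul, integral_schlomilchMap (sqrt_pos.2 hlam) (by positivity)
          (f := fun y => exp (-y) / √π) (by fun_prop) (fun y => by positivity), integral_div]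
    _ = exp (-a * √(2 * lam)) := by
        rw [show ∫ x, exp (-x ^ 2) = √π by simpa using integral_gaussian 1,
          div_self (sqrt_pos.2 pi_pos).ne', mul_one]
end

section
/- Fix a real h > 0 and define f_h^#(t) := (2^h/Γ(h)) ∑_{n=0}^∞ (−1)^n (Γ(n+h)/Γ(n+1)) · ((2n+h)/√(2πt³)) · exp(−(2n+h)²/(2t)) for t > 0. Then for every real λ > 0, ∫₀^∞ e^{−λt} f_h^#(t) dt = (cosh √(2λ))^{−h}. -/
/-!
With `a = 2n + h`, the `n`-th term of the series is a multiple of the Lévy density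
`a / √(2π t³) · exp (-a² / (2t))`, whose Laplace transform is `exp (-a √(2λ))`: the substitution
`t = x⁻²` turns it into the Cauchy–Schlömilch identity `∫₀^∞ g (α x - β / x) dx = (2α)⁻¹ ∫ g` for
an even Gaussian `g`. Integrating term by term then leaves, with `s = √(2λ)`, the binomial series
`∑ (-1)ⁿ Γ(n+h)/n! e^{-(2n+h)s} = Γ(h) e^{-hs} (1 + e^{-2s})^{-h} = Γ(h) (2 cosh s)^{-h}`, whose
absolute convergence (as `e^{-2s} < 1`) justifies the interchange.
-/

open Real Set MeasureTheory

variable {E : Type*} [NormedAddCommGroup E] [NormedSpace ℝ E]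

theorem integral_Ioi_div_sq_smul_comp_div (f : ℝ → E) {c : ℝ} (hc : 0 < c) :
    ∫ x in Ioi 0, (c / x ^ 2) • f (c / x) = ∫ x in Ioi 0, f x := by
  have h := integral_comp_rpow_Ioi (fun y => f (c * y)) (p := -1) (by norm_num)
  rw [integral_comp_mul_left_Ioi f 0 hc, mul_zero] at h
  rw [← smul_inv_smul₀ hc.ne' (∫ x in Ioi 0, f x), ← h, ← integral_smul]
  refine setIntegral_congr_fun measurableSet_Ioi fun x (hx : 0 < x) => ?_
  simp only [smul_smul]
  congr 1
  · norm_num [rpow_neg hx.le, div_eq_mul_inv]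
  · rw [rpow_neg_one, div_eq_mul_inv]

section CauchySchlomilch

variable {α β : ℝ}

theorem image_mul_sub_div_Ioi (hα : 0 < α) (hβ : 0 < β) :
    (fun x => α * x - β / x) '' Ioi 0 = univ := by
  refine eq_univ_of_forall fun u => ?_
  set d := √(u ^ 2 + 4 * α * β)
  have hd : d ^ 2 = u ^ 2 + 4 * α * β := sq_sqrt (by positivity)
  have hud : |u| < d := by
    rw [← sqrt_sq_eq_abs]
    exact sqrt_lt_sqrt (sq_nonneg _) (by nlinarith [mul_pos hα hβ])
  have hud' : 0 < u + d := by linarith [neg_abs_le u]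
  have hx : 0 < (u + d) / (2 * α) := by positivity
  -- the positive root of `α x² - u x - β`
  refine ⟨(u + d) / (2 * α), hx, ?_⟩
  field_simp
  linear_combination hd

theorem hasDerivAt_mul_sub_div {x : ℝ} (hx : x ≠ 0) :
    HasDerivAt (fun x => α * x - β / x) (α + β / x ^ 2) x := by
  have h := ((hasDerivAt_id x).const_mul α).sub ((hasDerivAt_inv hx).const_mul β)
  simp only [id, mul_one, ← div_eq_mul_inv] at h
  exact h.congr_deriv (by ring)

theorem strictMonoOn_mul_sub_div (hα : 0 < α) (hβ : 0 ≤ β) :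
    StrictMonoOn (fun x => α * x - β / x) (Ioi 0) := fun x (hx : 0 < x) y _ hxy => by
  linarith [mul_lt_mul_of_pos_left hxy hα, div_le_div_of_nonneg_left hβ hx hxy.le]

theorem integral_Ioi_deriv_smul_comp_mul_sub_div (hα : 0 < α) (hβ : 0 < β) (g : ℝ → E) :
    ∫ x in Ioi 0, (α + β / x ^ 2) • g (α * x - β / x) = ∫ u, g u := by
  conv_rhs => rw [← setIntegral_univ, ← image_mul_sub_div_Ioi hα hβ]
  rw [integral_image_eq_integral_abs_deriv_smul measurableSet_Ioi
      (fun x hx => (hasDerivAt_mul_sub_div (ne_of_gt hx)).hasDerivWithinAt)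
      (strictMonoOn_mul_sub_div hα hβ.le).injOn]
  refine setIntegral_congr_fun measurableSet_Ioi fun x _ => ?_
  rw [abs_of_pos (by positivity)]

theorem integrableOn_Ioi_deriv_smul_comp_mul_sub_div_iff (hα : 0 < α) (hβ : 0 < β) (g : ℝ → E) :
    IntegrableOn (fun x => (α + β / x ^ 2) • g (α * x - β / x)) (Ioi 0) ↔ Integrable g := by
  rw [← integrableOn_univ, ← image_mul_sub_div_Ioi hα hβ,
    integrableOn_image_iff_integrableOn_abs_deriv_smul measurableSet_Ioi
      (fun x hx => (hasDerivAt_mul_sub_div (ne_of_gt hx)).hasDerivWithinAt)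
      (strictMonoOn_mul_sub_div hα hβ.le).injOn]
  refine integrableOn_congr_fun (fun x _ => ?_) measurableSet_Ioi
  rw [abs_of_pos (by positivity)]

theorem integrableOn_Ioi_comp_mul_sub_div (hα : 0 < α) (hβ : 0 < β) {g : ℝ → E}
    (hg : Integrable g) : IntegrableOn (fun x => g (α * x - β / x)) (Ioi 0) := by
  have H := (integrableOn_Ioi_deriv_smul_comp_mul_sub_div_iff hα hβ g).2 hg
  have hpos (x : ℝ) : 0 < α + β / x ^ 2 := by positivity
  refine (H.bdd_smul α⁻¹
    (by fun_prop : Measurable fun x : ℝ => (α + β / x ^ 2)⁻¹).aestronglyMeasurable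
    (ae_of_all _ fun x => ?_)).congr (ae_of_all _ fun x => inv_smul_smul₀ (hpos x).ne' _)
  rw [norm_inv, Real.norm_of_nonneg (hpos x).le]
  exact inv_anti₀ hα (le_add_of_nonneg_right (by positivity))

theorem integral_Ioi_comp_mul_sub_div (hα : 0 < α) (hβ : 0 < β) {g : ℝ → E}
    (hg_even : ∀ u, g (-u) = g u) (hg : Integrable g) :
    ∫ x in Ioi 0, g (α * x - β / x) = (2 * α)⁻¹ • ∫ u, g u := by
  have hG := integrableOn_Ioi_comp_mul_sub_div hα hβ hg
  have hG' : IntegrableOn (fun x => (β / x ^ 2) • g (α * x - β / x)) (Ioi 0) :=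
    (((integrableOn_Ioi_deriv_smul_comp_mul_sub_div_iff hα hβ g).2 hg).sub (hG.smul α)).congr_fun
      (fun x _ => by simp only [Pi.sub_apply, Pi.smul_apply, add_smul, add_sub_cancel_left])
      measurableSet_Ioi
  -- the inversion `x ↦ (β / α) / x` changes the sign of `α x - β / x`
  have hflip : ∫ x in Ioi 0, (β / x ^ 2) • g (α * x - β / x)
      = ∫ x in Ioi 0, α • g (α * x - β / x) := by
    rw [← integral_Ioi_div_sq_smul_comp_div _ (div_pos hβ hα)]
    refine setIntegral_congr_fun measurableSet_Ioi fun x (hx : 0 < x) => ?_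
    have hsign : α * (β / α / x) - β / (β / α / x) = -(α * x - β / x) := by
      field_simp
      ring
    rw [hsign, hg_even, smul_smul]
    congr 1
    field_simp
  rw [← integral_Ioi_deriv_smul_comp_mul_sub_div hα hβ]
  simp_rw [add_smul]
  rw [integral_add (f := fun x => α • g (α * x - β / x)) (hG.smul α) hG', hflip, integral_smul,
    ← add_smul, smul_smul, show (2 * α)⁻¹ * (α + α) = 1 by field_simp; ring, one_smul]

end CauchySchlomilch

/-- The density of the first time a standard Brownian motion hits the level `a`. -/
noncomputable def levyDensity (a t : ℝ) : ℝ := a / √(2 * π * t ^ 3) * exp (-a ^ 2 / (2 * t))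

theorem levyDensity_nonneg {a : ℝ} (ha : 0 ≤ a) (t : ℝ) : 0 ≤ levyDensity a t := by
  unfold levyDensity
  positivity

theorem exp_mul_levyDensity_comp_rpow_neg_two {a lam x : ℝ} (hlam : 0 ≤ lam) (hx : 0 < x) :
    (|(-2 : ℝ)| * x ^ ((-2 : ℝ) - 1)) • (exp (-lam * x ^ (-2 : ℝ)) * levyDensity a (x ^ (-2 : ℝ)))
      = (2 * a / √(2 * π) * exp (-(a * √(2 * lam)))) *
          exp (-(1 / 2) * (a * x - √(2 * lam) / x) ^ 2) := by
  set s := √(2 * lam)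
  have hs : s ^ 2 = 2 * lam := sq_sqrt (by positivity)
  have hpow : x ^ (-2 : ℝ) = (x ^ 2)⁻¹ := by norm_num [rpow_neg hx.le]
  have hpow' : x ^ ((-2 : ℝ) - 1) = (x ^ 3)⁻¹ := by norm_num [rpow_neg hx.le]
  have hsqrt : √(2 * π * ((x ^ 2)⁻¹) ^ 3) = √(2 * π) / x ^ 3 := by
    rw [show 2 * π * ((x ^ 2)⁻¹) ^ 3 = 2 * π * ((x ^ 3)⁻¹) ^ 2 by ring, sqrt_mul (by positivity),
      sqrt_sq (by positivity), div_eq_mul_inv]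
  have hexp : exp (-lam * (x ^ 2)⁻¹) * exp (-a ^ 2 / (2 * (x ^ 2)⁻¹))
      = exp (-(a * s)) * exp (-(1 / 2) * (a * x - s / x) ^ 2) := by
    rw [← exp_add, ← exp_add]
    congr 1
    field_simp
    linear_combination hs
  rw [hpow, hpow', levyDensity, hsqrt, smul_eq_mul, abs_neg, abs_two]
  calc _ = 2 * a / √(2 * π) * (exp (-lam * (x ^ 2)⁻¹) * exp (-a ^ 2 / (2 * (x ^ 2)⁻¹))) := by
        field_simp
    _ = _ := by rw [hexp]; ring

theorem integrableOn_exp_mul_levyDensity {a lam : ℝ} (ha : 0 < a) (hlam : 0 < lam) :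
    IntegrableOn (fun t => exp (-lam * t) * levyDensity a t) (Ioi 0) := by
  rw [← integrableOn_Ioi_comp_rpow_iff _ (p := -2) (by norm_num)]
  exact IntegrableOn.congr_fun
    ((integrableOn_Ioi_comp_mul_sub_div ha (sqrt_pos.2 (by positivity))
      (integrable_exp_neg_mul_sq (b := 1 / 2) (by norm_num))).const_mul _)
    (fun x hx => (exp_mul_levyDensity_comp_rpow_neg_two hlam.le hx).symm) measurableSet_Ioi

theorem integral_exp_mul_levyDensity {a lam : ℝ} (ha : 0 < a) (hlam : 0 < lam) :
    ∫ t in Ioi 0, exp (-lam * t) * levyDensity a t = exp (-(a * √(2 * lam))) := by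
  rw [← integral_comp_rpow_Ioi _ (p := -2) (by norm_num),
    setIntegral_congr_fun measurableSet_Ioi
      (fun x hx => exp_mul_levyDensity_comp_rpow_neg_two hlam.le hx), integral_const_mul,
    integral_Ioi_comp_mul_sub_div ha (sqrt_pos.2 (by positivity)) (fun u => by rw [neg_sq])
      (integrable_exp_neg_mul_sq (b := 1 / 2) (by norm_num)), integral_gaussian,
    smul_eq_mul, show π / (1 / 2) = 2 * π by ring]
  field_simp

theorem integral_tsum_mul_exp_mul_levyDensity {b a : ℕ → ℝ} {lam : ℝ} (hlam : 0 < lam)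
    (ha : ∀ n, 0 < a n) (hsum : Summable fun n => |b n| * exp (-(a n * √(2 * lam)))) :
    ∫ t in Ioi 0, ∑' n, b n * (exp (-lam * t) * levyDensity (a n) t)
      = ∑' n, b n * exp (-(a n * √(2 * lam))) := by
  have hint (n : ℕ) :
      IntegrableOn (fun t => b n * (exp (-lam * t) * levyDensity (a n) t)) (Ioi 0) :=
    (integrableOn_exp_mul_levyDensity (ha n) hlam).const_mul _
  have hnorm (n : ℕ) : ∫ t in Ioi 0, ‖b n * (exp (-lam * t) * levyDensity (a n) t)‖
      = |b n| * exp (-(a n * √(2 * lam))) := by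
    simp_rw [norm_mul, norm_eq_abs, abs_of_nonneg (exp_pos _).le,
      abs_of_nonneg (levyDensity_nonneg (ha n).le _)]
    rw [integral_const_mul, integral_exp_mul_levyDensity (ha n) hlam]
  rw [← integral_tsum_of_summable_integral_norm hint (by simpa only [hnorm] using hsum)]
  congr with n
  rw [integral_const_mul, integral_exp_mul_levyDensity (ha n) hlam]

theorem Real.Gamma_add_nat_eq_ascPochhammer_mul {s : ℝ} (hs : ∀ m : ℕ, s + m ≠ 0) (n : ℕ) :
    Gamma (s + n) = (ascPochhammer ℝ n).eval s * Gamma s := by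
  induction n with
  | zero => simp
  | succ n ih =>
    rw [Nat.cast_succ, ← add_assoc, Gamma_add_one (hs n), ih, ascPochhammer_succ_eval]
    ring

theorem Ring.choose_neg_eq_Gamma {s : ℝ} (hs : ∀ m : ℕ, s + m ≠ 0) (n : ℕ) :
    Ring.choose (-s) n = (-1) ^ n * (Gamma (n + s) / Gamma (n + 1)) / Gamma s := by
  have hΓ : Gamma s ≠ 0 := Gamma_ne_zero fun m h => hs m (by rw [h]; ring)
  have key := Ring.factorial_nsmul_multichoose_eq_ascPochhammer s n
  rw [Polynomial.ascPochhammer_smeval_eq_eval, nsmul_eq_mul] at key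
  rw [Ring.choose_neg', Units.smul_def, zsmul_eq_mul, Int.cast_negOnePow_natCast, add_comm,
    Gamma_add_nat_eq_ascPochhammer_mul hs, Gamma_nat_eq_factorial, ← key]
  field_simp

theorem Real.hasSum_Gamma_div_mul_pow {s x : ℝ} (hs : ∀ m : ℕ, s + m ≠ 0) (hx : |x| < 1) :
    HasSum (fun n : ℕ => Gamma (n + s) / Gamma (n + 1) * x ^ n) (Gamma s * (1 - x) ^ (-s)) := by
  have hΓ : Gamma s ≠ 0 := Gamma_ne_zero fun m h => hs m (by rw [h]; ring)
  have hmem : -x ∈ Metric.eball (0 : ℝ) 1 := by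
    rw [Metric.mem_eball, edist_zero_right, enorm_neg, ← ofReal_norm, Real.norm_eq_abs]
    exact ENNReal.ofReal_lt_one.2 hx
  have hterm (n : ℕ) :
      Gamma s * (Ring.choose (-s) n * (-x) ^ n) = Gamma (n + s) / Gamma (n + 1) * x ^ n := by
    rw [Ring.choose_neg_eq_Gamma hs]
    calc _ = Gamma (n + s) / Gamma (n + 1) * ((-1) ^ n * (-x) ^ n) := by field_simp
      _ = _ := by rw [← mul_pow, neg_one_mul, neg_neg]
  have := ((one_add_rpow_hasFPowerSeriesOnBall_zero (a := -s)).hasSum hmem).mul_left (Gamma s)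
  simpa only [binomialSeries_apply, List.ofFn_const, List.prod_replicate, smul_eq_mul, zero_add,
    zero_sub, ← sub_eq_add_neg, hterm] using this

section BinomialExpansionCosh

variable {h s : ℝ}

theorem Real.exp_neg_two_mul_nat_add_mul (n : ℕ) :
    exp (-((2 * n + h) * s)) = exp (-(h * s)) * exp (-(2 * s)) ^ n := by
  rw [← exp_nat_mul, ← exp_add]
  ring_nf

theorem Real.abs_exp_neg_two_mul_lt_one (hs : 0 < s) : |exp (-(2 * s))| < 1 := by
  rw [abs_of_pos (exp_pos _), exp_lt_one_iff]
  linarith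

theorem Real.summable_Gamma_div_mul_exp (hh : ∀ m : ℕ, h + m ≠ 0) (hs : 0 < s) :
    Summable fun n : ℕ => Gamma (n + h) / Gamma (n + 1) * exp (-((2 * n + h) * s)) := by
  refine ((hasSum_Gamma_div_mul_pow hh (abs_exp_neg_two_mul_lt_one hs)).summable.mul_left
    (exp (-(h * s)))).congr fun n => ?_
  rw [exp_neg_two_mul_nat_add_mul]
  ring

theorem Real.hasSum_neg_one_pow_mul_Gamma_div_mul_exp (hh : ∀ m : ℕ, h + m ≠ 0) (hs : 0 < s) :
    HasSum (fun n : ℕ => (-1) ^ n * (Gamma (n + h) / Gamma (n + 1)) * exp (-((2 * n + h) * s)))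
      (Gamma h * (2 * cosh s) ^ (-h)) := by
  have hvalue : Gamma h * (2 * cosh s) ^ (-h)
      = exp (-(h * s)) * (Gamma h * (1 - -exp (-(2 * s))) ^ (-h)) := by
    have hcosh : 2 * cosh s = exp s * (1 + exp (-(2 * s))) := by
      rw [cosh_eq, mul_add, mul_one, ← exp_add]
      ring_nf
    rw [sub_neg_eq_add, hcosh, mul_rpow (exp_pos s).le (by positivity), ← exp_mul]
    ring_nf
  have hy : |-exp (-(2 * s))| < 1 := by
    rw [abs_neg]
    exact abs_exp_neg_two_mul_lt_one hs
  rw [hvalue]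
  refine ((hasSum_Gamma_div_mul_pow hh hy).mul_left (exp (-(h * s)))).congr_fun fun n => ?_
  rw [exp_neg_two_mul_nat_add_mul, neg_pow]
  ring

end BinomialExpansionCosh

/-- For `h > 0`, the density
`f_h^#(t) = (2^h/Γ(h)) ∑_{n≥0} (−1)^n (Γ(n+h)/Γ(n+1)) ((2n+h)/√(2πt³)) e^{−(2n+h)²/(2t)}`
has Laplace transform `(cosh √(2λ))^{−h}` at every `λ > 0`. -/
theorem laplace_transform_f_sharp (h : ℝ) (hh : 0 < h) (lam : ℝ) (hlam : 0 < lam) :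
    ∫ t in Set.Ioi (0 : ℝ),
        Real.exp (-lam * t) *
          ((2 : ℝ) ^ h / Real.Gamma h *
            ∑' n : ℕ, (-1 : ℝ) ^ n * (Real.Gamma ((n : ℝ) + h) / Real.Gamma ((n : ℝ) + 1)) *
              ((2 * (n : ℝ) + h) / Real.sqrt (2 * Real.pi * t ^ 3)) *
                Real.exp (-(2 * (n : ℝ) + h) ^ 2 / (2 * t)))
      = Real.cosh (Real.sqrt (2 * lam)) ^ (-h) := by
  have hs : 0 < √(2 * lam) := sqrt_pos.2 (by positivity)
  have hh' (m : ℕ) : h + m ≠ 0 := by positivity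
  have hsum : Summable fun n : ℕ => |(-1) ^ n * (Gamma (n + h) / Gamma (n + 1))| *
      exp (-((2 * n + h) * √(2 * lam))) :=
    (summable_Gamma_div_mul_exp hh' hs).congr fun n => by
      rw [abs_mul, abs_neg_one_pow, one_mul, abs_of_pos (by positivity)]
  calc _ = 2 ^ h / Gamma h * ∫ t in Ioi 0, ∑' n : ℕ, (-1) ^ n * (Gamma (n + h) / Gamma (n + 1)) *
          (exp (-lam * t) * levyDensity (2 * n + h) t) := by
        rw [← integral_const_mul]
        refine setIntegral_congr_fun measurableSet_Ioi fun t _ => ?_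
        simp only [levyDensity, ← tsum_mul_left]
        congr 1 with n
        ring
    _ = 2 ^ h / Gamma h * (Gamma h * (2 * cosh √(2 * lam)) ^ (-h)) := by
        rw [integral_tsum_mul_exp_mul_levyDensity hlam (fun n => by positivity) hsum,
          (hasSum_neg_one_pow_mul_Gamma_div_mul_exp hh' hs).tsum_eq]
    _ = _ := by
        rw [mul_rpow zero_le_two (cosh_pos _).le, rpow_neg zero_le_two]
        field_simp
end

section
/- For every real x > 0: ∑_{n ∈ ℤ} (−1)^n exp(−n²π²x/2) = √(2/(πx)) · ∑_{n ∈ ℤ} exp(−2(n + 1/2)²/x). -/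
open Real Complex

/-- Poisson summation instance: for `x > 0`,
`∑_{n∈ℤ} (−1)^n e^{−n²π²x/2} = √(2/(πx)) ∑_{n∈ℤ} e^{−2(n+1/2)²/x}`. -/
theorem kolmogorov_smirnov_reciprocal (x : ℝ) (hx : 0 < x) :
    ∑' n : ℤ, (-1 : ℝ) ^ n * Real.exp (-(n : ℝ) ^ 2 * Real.pi ^ 2 * x / 2)
      = Real.sqrt (2 / (Real.pi * x)) *
          ∑' n : ℤ, Real.exp (-2 * ((n : ℝ) + 1 / 2) ^ 2 / x) := by
  have hπ := Real.pi_pos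
  have ha : (0:ℝ) < Real.pi * x / 2 := by positivity
  have key := Complex.tsum_exp_neg_quadratic
    (a := ((Real.pi * x / 2 : ℝ) : ℂ)) (by simpa using ha) (Complex.I / 2)
  have hxC : ((x:ℂ)) ≠ 0 := by exact_mod_cast hx.ne'
  have hπC : ((Real.pi : ℂ)) ≠ 0 := by exact_mod_cast hπ.ne'
  -- rewrite left side of key
  have hL : ∀ n : ℤ, Complex.exp (-↑Real.pi * ((Real.pi * x / 2 : ℝ):ℂ) * (n:ℂ) ^ 2
        + 2 * ↑Real.pi * (Complex.I/2) * (n:ℂ))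
      = (((-1:ℝ) ^ n * Real.exp (-(n:ℝ)^2 * Real.pi^2 * x / 2) : ℝ) : ℂ) := by
    intro n
    rw [Complex.exp_add]
    have h1 : Complex.exp (2 * ↑Real.pi * (Complex.I/2) * (n:ℂ)) = (-1:ℂ)^n := by
      rw [show (2 * (Real.pi:ℂ) * (Complex.I/2) * (n:ℂ)) = (n:ℂ) * ((Real.pi:ℂ) * Complex.I) by
        ring, Complex.exp_int_mul, Complex.exp_pi_mul_I]
    rw [h1, show (-↑Real.pi * ((Real.pi * x / 2 : ℝ):ℂ) * (n:ℂ) ^ 2)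
        = (((-(n:ℝ)^2 * Real.pi^2 * x / 2 : ℝ)):ℂ) by push_cast; ring,
      ← Complex.ofReal_exp]
    push_cast
    ring
  -- rewrite right side summand of key
  have hR : ∀ n : ℤ, Complex.exp (-↑Real.pi / ((Real.pi * x / 2 : ℝ):ℂ)
        * ((n:ℂ) + Complex.I * (Complex.I/2)) ^ 2)
      = ((Real.exp (-2 * ((n:ℝ) - 1/2)^2 / x) : ℝ) : ℂ) := by
    intro n
    rw [show (-↑Real.pi / ((Real.pi * x / 2 : ℝ):ℂ) * ((n:ℂ) + Complex.I * (Complex.I/2)) ^ 2)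
        = ((-2 * ((n:ℝ) - 1/2)^2 / x : ℝ) : ℂ) by
      rw [show Complex.I * (Complex.I/2) = Complex.I * Complex.I / 2 by ring, Complex.I_mul_I]
      push_cast
      field_simp
      ring, ← Complex.ofReal_exp]
  rw [tsum_congr hL, tsum_congr hR] at key
  -- the power term
  have hpow : ((Real.pi * x / 2 : ℝ) : ℂ) ^ (1/2 : ℂ)
      = ((Real.sqrt (Real.pi * x / 2) : ℝ) : ℂ) := by
    rw [Real.sqrt_eq_rpow, Complex.ofReal_cpow ha.le]
    push_cast
    ring_nf
  rw [hpow] at key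
  -- reindex the right sum: n ↦ -n
  have hre : ∑' n : ℤ, Real.exp (-2 * ((n:ℝ) - 1/2)^2 / x)
      = ∑' n : ℤ, Real.exp (-2 * ((n:ℝ) + 1/2)^2 / x) := by
    rw [← (Equiv.neg ℤ).tsum_eq (fun n : ℤ => Real.exp (-2 * ((n:ℝ) + 1/2)^2 / x))]
    refine tsum_congr fun n => ?_
    simp only [Equiv.neg_apply]
    congr 1
    push_cast
    ring
  -- sqrt relation
  have hs : (1 : ℝ) / Real.sqrt (Real.pi * x / 2) = Real.sqrt (2 / (Real.pi * x)) := by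
    rw [one_div, ← Real.sqrt_inv]
    congr 1
    field_simp
  -- assemble
  have := key
  rw [← Complex.ofReal_tsum, ← Complex.ofReal_tsum] at this
  have h2 : ((∑' n : ℤ, (-1:ℝ)^n * Real.exp (-(n:ℝ)^2 * Real.pi^2 * x / 2) : ℝ) : ℂ)
      = (((1 / Real.sqrt (Real.pi * x / 2)) * ∑' n : ℤ, Real.exp (-2 * ((n:ℝ) - 1/2)^2 / x) : ℝ) : ℂ) := by
    rw [this]
    push_cast
    ring
  have h3 := Complex.ofReal_inj.mp h2
  rw [h3, hs, hre]
end
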